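/- arXiv:math/0202224 — 2 statements merged into one kernel-verified Lean document; each statement's English description precedes it below -/
import Mathlib

section
/- Let p be a prime, G cyclic of order p, and J an F_p[G]-module. Every free F_p[G]-submodule of J (on possibly infinitely many generators) is a direct summand of J. -/
/-!
For `G` cyclic of order `n`, `K[G]` is the quotient `K[X] ⧸ (X ^ n - 1)` of a principal ideal
domain by a nonzero ideal `(c)`. Such a quotient `R` satisfies `ann (ann a) = (a)`: if `u` lifts
`a` and `d = gcd u c`, then `c / d` kills `a`, anything killed by `c / d` lifts to a multiple of
`d`, and `d ∈ (u, c)` maps into `(a)`. For a principal ideal ring with this property, a map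
`(a) → M` into a free module extends to `R` coordinate by coordinate, so free modules satisfy
Baer's criterion; being injective, they split off from every module containing them.
-/

/-- The group algebra `𝔽_p[G]` for `G` the cyclic group of order `p`
(realized concretely as `Multiplicative (ZMod p)`). -/
abbrev GroupAlg (p : ℕ) := MonoidAlgebra (ZMod p) (Multiplicative (ZMod p))

open Polynomial

section DoubleAnnihilator

variable {R M : Type*} [CommRing R] [AddCommGroup M] [Module R M]

theorem Module.Free.exists_eq_smul_of_forall_smul_eq_zero [Module.Free R M]
    (hR : ∀ a x : R, (∀ y, y * a = 0 → y * x = 0) → a ∣ x) {a : R} {n : M}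
    (hn : ∀ y : R, y * a = 0 → y • n = 0) : ∃ m, n = a • m := by
  let b := Module.Free.chooseBasis R M
  have hdvd : ∀ i, a ∣ b.repr n i := fun i ↦ hR _ _ fun y hy ↦ by
    simpa using congrArg (b.repr · i) (hn y hy)
  choose d hd using hdvd
  refine ⟨∑ i ∈ (b.repr n).support, d i • b i, ?_⟩
  conv_lhs => rw [← b.linearCombination_repr n, Finsupp.linearCombination_apply, Finsupp.sum]
  simp only [hd, mul_smul, Finset.smul_sum]

theorem Module.Baer.of_free [IsPrincipalIdealRing R] [Module.Free R M]
    (hR : ∀ a x : R, (∀ y, y * a = 0 → y * x = 0) → a ∣ x) : Module.Baer R M := by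
  intro I g
  obtain ⟨a, rfl⟩ := (IsPrincipalIdealRing.principal I).principal
  have ha : a ∈ Ideal.span {a} := Ideal.mem_span_singleton_self a
  obtain ⟨m, hm⟩ : ∃ m, g ⟨a, ha⟩ = a • m :=
    Module.Free.exists_eq_smul_of_forall_smul_eq_zero hR fun y hy ↦ by
      rw [← map_smul, show y • (⟨a, ha⟩ : Ideal.span {a}) = 0 from Subtype.ext hy, map_zero]
  refine ⟨LinearMap.toSpanSingleton R M m, fun x hx ↦ ?_⟩
  obtain ⟨r, rfl⟩ := Ideal.mem_span_singleton'.mp hx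
  rw [show (⟨r * a, hx⟩ : Ideal.span {a}) = r • ⟨a, ha⟩ from rfl, map_smul, hm,
    LinearMap.toSpanSingleton_apply, mul_smul]

end DoubleAnnihilator

theorem dvd_of_forall_mul_eq_zero_of_surjective {A R : Type*} [CommRing A] [IsDomain A]
    [IsPrincipalIdealRing A] [CommRing R] {f : A →+* R} (hf : Function.Surjective f)
    (hker : RingHom.ker f ≠ ⊥) {a x : R} (h : ∀ y, y * a = 0 → y * x = 0) : a ∣ x := by
  obtain ⟨c, hc⟩ := (IsPrincipalIdealRing.principal (RingHom.ker f)).principal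
  rw [Ideal.submodule_span_eq] at hc
  have hc0 : c ≠ 0 := by rintro rfl; simp [hc] at hker
  obtain ⟨u, rfl⟩ := hf a
  obtain ⟨v, rfl⟩ := hf x
  obtain ⟨s, t, hst⟩ := IsBezout.gcd_eq_sum u c
  set d := IsBezout.gcd u c
  obtain ⟨e, he⟩ : d ∣ c := IsBezout.gcd_dvd_right u c
  obtain ⟨u', hu'⟩ : d ∣ u := IsBezout.gcd_dvd_left u c
  have hfc : f c = 0 := by rw [← RingHom.mem_ker, hc]; exact Ideal.mem_span_singleton_self c
  have hev : e * v ∈ RingHom.ker f := by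
    rw [RingHom.mem_ker, map_mul]
    refine h _ ?_
    rw [← map_mul, hu', ← mul_assoc, mul_comm e, ← he, map_mul, hfc, zero_mul]
  obtain ⟨w, hw⟩ : d ∣ v := by
    rw [hc, Ideal.mem_span_singleton, he, mul_comm d] at hev
    exact (mul_dvd_mul_iff_left (right_ne_zero_of_mul (he ▸ hc0))).mp hev
  refine ⟨f s * f w, ?_⟩
  rw [hw, ← hst, map_mul, map_add, map_mul, map_mul, hfc]
  ring

theorem MonoidAlgebra.surjective_aeval_of {K G : Type*} [CommSemiring K] [CommMonoid G] {g : G}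
    (hg : ∀ x : G, x ∈ Submonoid.powers g) :
    Function.Surjective (aeval (R := K) (of K G g)) := by
  intro f
  induction f using MonoidAlgebra.induction_on with
  | of x => obtain ⟨n, rfl⟩ := hg x; exact ⟨X ^ n, by simp⟩
  | add f f' hf hf' =>
    obtain ⟨P, rfl⟩ := hf; obtain ⟨Q, rfl⟩ := hf'; exact ⟨P + Q, map_add _ _ _⟩
  | smul r f hf => obtain ⟨P, rfl⟩ := hf; exact ⟨r • P, map_smul _ _ _⟩

theorem MonoidAlgebra.baer_of_free {K G M : Type*} [Field K] [CommGroup G] [Finite G] [IsCyclic G]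
    [AddCommGroup M] [Module (MonoidAlgebra K G) M] [Module.Free (MonoidAlgebra K G) M] :
    Module.Baer (MonoidAlgebra K G) M := by
  obtain ⟨g, hg⟩ := IsCyclic.exists_generator (α := G)
  set f := (aeval (R := K) (of K G g)).toRingHom
  have hf : Function.Surjective f :=
    surjective_aeval_of fun x ↦ mem_powers_iff_mem_zpowers.mpr (hg x)
  have hker : RingHom.ker f ≠ ⊥ := by
    rw [Ne, RingHom.ker_eq_bot_iff_eq_zero]
    refine fun h ↦ X_pow_sub_C_ne_zero (Nat.card_pos (α := G)) 1 (h _ ?_)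
    change aeval (of K G g) (X ^ Nat.card G - C 1) = 0
    rw [map_sub, map_pow, aeval_X, aeval_C, ← map_pow, pow_card_eq_one', map_one, map_one, sub_self]
  have := IsPrincipalIdealRing.of_surjective f hf
  exact Module.Baer.of_free fun a x ↦ dvd_of_forall_mul_eq_zero_of_surjective hf hker

theorem Submodule.exists_isCompl_of_injective {R M : Type*} [Ring R] [AddCommGroup M] [Module R M]
    (N : Submodule R M) [Module.Injective R N] : ∃ N' : Submodule R M, IsCompl N N' := by
  obtain ⟨π, hπ⟩ := Module.Injective.out N.subtype N.injective_subtype LinearMap.id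
  exact ⟨LinearMap.ker π, LinearMap.isCompl_of_proj hπ⟩

/-- Every free `𝔽_p[G]`-submodule of an `𝔽_p[G]`-module `J` (on possibly infinitely many
generators) is a direct summand of `J`. -/
theorem free_submodule_isCompl
    (p : ℕ) [Fact p.Prime]
    (J : Type) [AddCommGroup J] [Module (GroupAlg p) J]
    (N : Submodule (GroupAlg p) J) (hfree : Module.Free (GroupAlg p) N) :
    ∃ N' : Submodule (GroupAlg p) J, IsCompl N N' :=
  have : Module.Injective (GroupAlg p) N := MonoidAlgebra.baer_of_free.injective
  N.exists_isCompl_of_injective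
end

section
/- Let F be a field of characteristic not p containing a primitive p-th root of unity ξ_p, let a ∈ F with K = F(a^{1/p}) a cyclic extension of degree p, and let σ generate Gal(K/F) with σ(a^{1/p})/a^{1/p} = ξ_p. Let J = K^×/(K^×)^p and let J_1 = J^G be the fixed submodule under G = Gal(K/F). If ξ_p is not a norm from K^× to F^×, then J_1 equals ε(F^×), the image of F^× in K^×/(K^×)^p. -/
/-!
A class `[γ]` fixed by `σ` means `σ γ = γ β^p`. Taking norms gives `N(β)^p = 1`; a nontrivial
`p`-th root of unity would have `ξ` among its powers and so make `ξ` a norm, hence `N(β) = 1`.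
Hilbert 90 for the cyclic group `⟨σ⟩` writes `β = y / σ y`, so `γ y^p` is fixed by `σ`, hence
by all of `Gal(K/F)`; it therefore lies in `F` and has the same class as `γ`.
-/

noncomputable section

namespace KummerSetup

variable (p : ℕ) (F K : Type) [Field F] [Field K] [Algebra F K]

/-- The subgroup of `p`-th powers in `Kˣ`. -/
def powSub : Subgroup Kˣ := (powMonoidHom p : Kˣ →* Kˣ).range

/-- `J = Kˣ/(Kˣ)^p`. -/
abbrev Jgrp := Kˣ ⧸ powSub p K

/-- The class of a unit in `J`. -/
def mkJ : Kˣ →* Jgrp p K := QuotientGroup.mk' (powSub p K)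

/-- Action of an `F`-automorphism of `K` on units. -/
def galU (τ : K ≃ₐ[F] K) : Kˣ →* Kˣ := Units.map (τ.toAlgHom.toRingHom.toMonoidHom)

lemma powSub_le (τ : K ≃ₐ[F] K) : powSub p K ≤ (powSub p K).comap (galU F K τ) := by
  rintro x ⟨y, rfl⟩
  exact ⟨galU F K τ y, by simp [powMonoidHom, map_pow]⟩

/-- The induced action of an `F`-automorphism of `K` on `J = Kˣ/(Kˣ)^p`. -/
def galJ (τ : K ≃ₐ[F] K) : Jgrp p K →* Jgrp p K :=
  QuotientGroup.map _ _ (galU F K τ) (powSub_le p F K τ)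

/-- The subgroup `J^G` of `J` fixed by all of `Gal(K/F)`. -/
def fixedJ : Subgroup (Jgrp p K) where
  carrier := {x | ∀ τ : K ≃ₐ[F] K, galJ p F K τ x = x}
  one_mem' := fun τ => map_one _
  mul_mem' := by intro a b ha hb τ; rw [map_mul, ha τ, hb τ]
  inv_mem' := by intro a ha τ; rw [map_inv, ha τ]

/-- The norm on units, `N : Kˣ →* Fˣ`. -/
def normU : Kˣ →* Fˣ := Units.map (Algebra.norm F : K →* F)

/-- The natural map `Fˣ →* Kˣ`. -/
def incU : Fˣ →* Kˣ := Units.map (algebraMap F K).toMonoidHom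

/-- `ε : Fˣ →* J`, with image `ε(F^×) = F^×·(K^×)^p/(K^×)^p`. -/
def epsF : Fˣ →* Jgrp p K := (mkJ p K).comp (incU F K)

/-- `F^×/(F^×)^p`. -/
abbrev QF := Fˣ ⧸ powSub p F

/-- The map `F^×/(F^×)^p → J` induced by `F ⊆ K`. -/
def epsQ : QF p F →* Jgrp p K :=
  QuotientGroup.map _ _ (incU F K) (by rintro x ⟨y, rfl⟩; exact ⟨incU F K y, by simp [powMonoidHom, map_pow]⟩)

/-- The map `J → F^×/(F^×)^p` induced by the norm. -/
def normJ : Jgrp p K →* QF p F :=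
  QuotientGroup.map _ _ (normU F K) (by rintro x ⟨y, rfl⟩; exact ⟨normU F K y, by simp [powMonoidHom, map_pow]⟩)

/-- The cyclic `𝔽_p[G]`-submodule `M_γ` of `J` generated by the class of `γ`:
the subgroup generated by the `σ`-orbit of `[γ]`. -/
def Mgam (σ : K ≃ₐ[F] K) (γ : Kˣ) : Subgroup (Jgrp p K) :=
  Subgroup.closure {x | ∃ k : ℕ, (galJ p F K (σ ^ k)) (mkJ p K γ) = x}

end KummerSetup

end

open KummerSetup

lemma IsPrimitiveRoot.exists_pow_eq_of_pow_prime_eq_one {R : Type*} [CommRing R] [IsDomain R]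
    {p : ℕ} [Fact p.Prime] {ξ x : R} (hξ : IsPrimitiveRoot ξ p) (hx : x ^ p = 1) (hx1 : x ≠ 1) :
    ∃ n, x ^ n = ξ :=
  have : NeZero p := ⟨(Fact.out : p.Prime).ne_zero⟩
  have hprim : IsPrimitiveRoot x p := IsPrimitiveRoot.iff_orderOf.mpr (orderOf_eq_prime hx hx1)
  let ⟨n, _, hn⟩ := hprim.eq_pow_of_pow_eq_one hξ.pow_eq_one
  ⟨n, hn⟩

lemma Algebra.ne_zero_of_adjoin_singleton_eq_top {F K : Type*} [Field F] [Field K] [Algebra F K]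
    {α : K} (hadj : Algebra.adjoin F {α} = ⊤) (hK : Module.finrank F K ≠ 1) : α ≠ 0 := by
  rintro rfl
  rw [Algebra.adjoin_singleton_zero] at hadj
  exact hK (Subalgebra.bot_eq_top_iff_finrank_eq_one.mp hadj)

lemma AlgEquiv.ne_one_of_apply_eq_algebraMap_mul {F K : Type*} [Field F] [Field K] [Algebra F K]
    {σ : K ≃ₐ[F] K} {α : K} {ξ : F} (hα : α ≠ 0) (hξ : ξ ≠ 1)
    (hσ : σ α = algebraMap F K ξ * α) : σ ≠ 1 := by
  rintro rfl
  refine hξ ((algebraMap F K).injective ?_)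
  rw [map_one, ← mul_left_inj' hα, ← hσ, AlgEquiv.one_apply, one_mul]

namespace KummerSetup

variable {p : ℕ} {F K : Type} [Field F] [Field K] [Algebra F K]

lemma mkJ_pow_eq_one (u : Kˣ) : mkJ p K (u ^ p) = 1 :=
  (QuotientGroup.eq_one_iff _).mpr ⟨u, rfl⟩

lemma normU_galU (τ : K ≃ₐ[F] K) (u : Kˣ) : normU F K (galU F K τ u) = normU F K u :=
  Units.ext (Algebra.norm_eq_of_algEquiv τ (u : K))

lemma galU_incU (τ : K ≃ₐ[F] K) (u : Fˣ) : galU F K τ (incU F K u) = incU F K u :=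
  Units.ext (τ.commutes u)

lemma epsF_range_le_fixedJ : (epsF p F K).range ≤ fixedJ p F K := by
  rintro _ ⟨u, rfl⟩ τ
  exact congrArg (mkJ p K) (galU_incU τ u)

lemma exists_galU_eq_mul_pow_of_galJ_mkJ_eq {τ : K ≃ₐ[F] K} {γ : Kˣ}
    (h : galJ p F K τ (mkJ p K γ) = mkJ p K γ) : ∃ β : Kˣ, galU F K τ γ = γ * β ^ p := by
  obtain ⟨_, ⟨β, rfl⟩, hβ⟩ := (QuotientGroup.mk'_eq_mk' _).mp h
  exact ⟨β⁻¹, by rw [inv_pow, eq_mul_inv_iff_mul_eq]; exact hβ⟩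

lemma normU_pow_eq_one_of_galU_eq_mul_pow {τ : K ≃ₐ[F] K} {γ β : Kˣ}
    (h : galU F K τ γ = γ * β ^ p) : normU F K β ^ p = 1 := by
  have := congrArg (normU F K) h
  rwa [normU_galU, map_mul, map_pow, left_eq_mul] at this

lemma normU_eq_one_of_pow_eq_one [Fact p.Prime] {ξ : F} (hξ : IsPrimitiveRoot ξ p)
    (hnotnorm : ¬ ∃ u : Kˣ, Algebra.norm F (u : K) = ξ) {β : Kˣ}
    (hβ : normU F K β ^ p = 1) : normU F K β = 1 := by
  by_contra hne
  obtain ⟨n, hn⟩ := hξ.exists_pow_eq_of_pow_prime_eq_one (x := (normU F K β : F))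
    (by rw [← Units.val_pow_eq_pow_val, hβ, Units.val_one]) (by rwa [ne_eq, Units.val_eq_one])
  exact hnotnorm ⟨β ^ n, by rw [← hn, ← Units.val_pow_eq_pow_val, ← map_pow]; rfl⟩

lemma mem_range_incU_of_forall_galU_eq [FiniteDimensional F K] [IsGalois F K] {c : Kˣ}
    (hc : ∀ τ : K ≃ₐ[F] K, galU F K τ c = c) : c ∈ (incU F K).range := by
  obtain ⟨u, hu⟩ := (IsGalois.mem_range_algebraMap_iff_fixed (c : K)).mpr
    fun τ => congrArg Units.val (hc τ)
  have hu0 : u ≠ 0 := by rintro rfl; exact c.ne_zero (by rw [← hu, map_zero])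
  exact ⟨Units.mk0 u hu0, Units.ext hu⟩

lemma fixedJ_le_epsF_range [FiniteDimensional F K] [IsGalois F K] {σ : K ≃ₐ[F] K}
    (hσ : ∀ τ, τ ∈ Subgroup.zpowers σ)
    (hnorm : ∀ β : Kˣ, normU F K β ^ p = 1 → normU F K β = 1) :
    fixedJ p F K ≤ (epsF p F K).range := by
  intro x hx
  obtain ⟨γ, rfl⟩ := QuotientGroup.mk'_surjective (powSub p K) x
  obtain ⟨β, hβ⟩ := exists_galU_eq_mul_pow_of_galJ_mkJ_eq (hx σ)
  have : IsCyclic (K ≃ₐ[F] K) := ⟨⟨σ, hσ⟩⟩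
  obtain ⟨y, hy⟩ := groupCohomology.exists_div_of_norm_eq_one hσ
    (congrArg Units.val (hnorm β (normU_pow_eq_one_of_galU_eq_mul_pow hβ)))
  have hy' : β * galU F K σ y = y :=
    Units.ext (by rw [Units.val_mul, ← hy]; exact div_mul_cancel₀ _ (galU F K σ y).ne_zero)
  have hσc : σ ∈ MulAction.stabilizer (K ≃ₐ[F] K) ((γ * y ^ p : Kˣ) : K) := by
    rw [MulAction.mem_stabilizer_iff]
    exact congrArg Units.val (show galU F K σ (γ * y ^ p) = γ * y ^ p by
      rw [map_mul, map_pow, hβ, mul_assoc, ← mul_pow, hy'])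
  obtain ⟨u, hu⟩ := mem_range_incU_of_forall_galU_eq fun τ =>
    Units.ext (MulAction.mem_stabilizer_iff.mp (Subgroup.zpowers_le.mpr hσc (hσ τ)))
  refine ⟨u, ?_⟩
  rw [epsF, MonoidHom.comp_apply, hu, map_mul, mkJ_pow_eq_one]
  exact mul_one (mkJ p K γ)

end KummerSetup

theorem fixed_eq_epsF_of_xi_not_norm_general
    (p : ℕ) [Fact p.Prime] (F K : Type) [Field F] [Field K] [Algebra F K]
    (ξ : F) (hξ : IsPrimitiveRoot ξ p)
    (α : K)
    (hadj : Algebra.adjoin F {α} = ⊤)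
    [IsGalois F K] (hdeg : Module.finrank F K = p)
    (σ : K ≃ₐ[F] K) (hσ : σ α = algebraMap F K ξ * α)
    (hnotnorm : ¬ ∃ u : Kˣ, Algebra.norm F (u : K) = ξ) :
    fixedJ p F K = (epsF p F K).range := by
  have hp : p.Prime := Fact.out
  have : FiniteDimensional F K := Module.finite_of_finrank_pos (hdeg ▸ hp.pos)
  have hα : α ≠ 0 := Algebra.ne_zero_of_adjoin_singleton_eq_top hadj (hdeg ▸ hp.one_lt.ne')
  have hσ1 : σ ≠ 1 := AlgEquiv.ne_one_of_apply_eq_algebraMap_mul hα (hξ.ne_one hp.one_lt) hσ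
  have hcard : Nat.card (K ≃ₐ[F] K) = p := by rw [IsGalois.card_aut_eq_finrank, hdeg]
  refine le_antisymm ?_ epsF_range_le_fixedJ
  exact fixedJ_le_epsF_range (fun _ => mem_zpowers_of_prime_card hcard hσ1)
    (fun _ => normU_eq_one_of_pow_eq_one hξ hnotnorm)

/-- If `ξ_p` is not a norm from `Kˣ`, then the `Gal(K/F)`-fixed subgroup `J_1 = J^G` of
`J = Kˣ/(Kˣ)^p` equals `ε(F^×)`, the image of `F^×` in `Kˣ/(Kˣ)^p`. -/
theorem fixed_eq_epsF_of_xi_not_norm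
    (p : ℕ) [Fact p.Prime] (F K : Type) [Field F] [Field K] [Algebra F K]
    (hchar : (p : F) ≠ 0) (ξ : F) (hξ : IsPrimitiveRoot ξ p)
    (a : F) (α : K) (hα : α ^ p = algebraMap F K a)
    (hadj : Algebra.adjoin F {α} = ⊤)
    [IsGalois F K] (hdeg : Module.finrank F K = p)
    (σ : K ≃ₐ[F] K) (hσ : σ α = algebraMap F K ξ * α)
    (hnotnorm : ¬ ∃ u : Kˣ, Algebra.norm F (u : K) = ξ) :
    fixedJ p F K = (epsF p F K).range :=
  fixed_eq_epsF_of_xi_not_norm_general p F K ξ hξ α hadj hdeg σ hσ hnotnorm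
end
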